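/- Let n be a positive integer and let r, c, d be positive real numbers with 0 < d < n. Then there exists a compact set Z ⊂ ℝ^n with Hausdorff dimension d, diameter at most r, and m_d(Z) = c; in particular Z is a d-set. -/

import Mathlib

/-!
For `a = 2 ^ (-n / d) < 1 / 2`, the product `C_a ^ n` of `n` copies of the Cantor set with
ratio `a` is covered, for each `k`, by `2 ^ (n k)` cylinders of diameter `≲ a ^ k`, and
`2 ^ (n k) (a ^ k) ^ d = 1`, so its `d`-dimensional Hausdorff measure is finite. It is positive
because sending the point of `C_a` with digits `ω` to the binary number `0.ω₀ω₁…` is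
`(d / n)`-Hölder and maps `C_a ^ n` onto `[0, 1] ^ n`. A linear image of this set in any
`n`-dimensional real normed space is a compact `K` with `0 < μH[d] K < ∞`. Now `M ^ n` disjoint
translates of `K` along a grid form a set of measure `M ^ n μH[d] K` and diameter `O(M)`;
scaling it to measure `c` leaves a diameter `O(M ^ (1 - n / d))`, which is at most `r` for
large `M` because `d < n`.
-/

open MeasureTheory Set Filter Topology
open scoped NNReal ENNReal Pointwise

lemma exists_holderOnWith_range_comp_eq {α X Y : Type*} [Nonempty α] [PseudoEMetricSpace X]
    [EMetricSpace Y] {C r : ℝ≥0} (hr : 0 < r) {f : α → Y} {g : α → X}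
    (h : ∀ x y, edist (f x) (f y) ≤ C * edist (g x) (g y) ^ (r : ℝ)) :
    ∃ F : X → Y, HolderOnWith C r F (range g) ∧ F ∘ g = f := by
  refine ⟨f ∘ Function.invFun g, ?_, funext fun x => ?_⟩
  · rintro - ⟨x, rfl⟩ - ⟨y, rfl⟩
    simpa [Function.invFun_eq (⟨_, rfl⟩ : ∃ z, g z = g x),
      Function.invFun_eq (⟨_, rfl⟩ : ∃ z, g z = g y)] using
      h (Function.invFun g (g x)) (Function.invFun g (g y))
  · refine edist_le_zero.mp ((h _ x).trans_eq ?_)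
    rw [Function.invFun_eq (⟨x, rfl⟩ : ∃ z, g z = g x), edist_self,
      ENNReal.zero_rpow_of_pos (by exact_mod_cast hr), mul_zero]

lemma LipschitzWith.hausdorffMeasure_image_ne_top {X Y : Type*} [EMetricSpace X] [EMetricSpace Y]
    [MeasurableSpace X] [BorelSpace X] [MeasurableSpace Y] [BorelSpace Y] {K : ℝ≥0} {f : X → Y}
    (hf : LipschitzWith K f) {d : ℝ} (hd : 0 ≤ d) {s : Set X} (hs : μH[d] s ≠ ∞) :
    μH[d] (f '' s) ≠ ∞ :=
  ne_top_of_le_ne_top (ENNReal.mul_ne_top (by simp [hd]) hs) (hf.hausdorffMeasure_image_le hd s)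

lemma AntilipschitzWith.hausdorffMeasure_image_ne_zero {X Y : Type*} [EMetricSpace X]
    [EMetricSpace Y] [MeasurableSpace X] [BorelSpace X] [MeasurableSpace Y] [BorelSpace Y]
    {K : ℝ≥0} {f : X → Y} (hf : AntilipschitzWith K f) {d : ℝ} (hd : 0 ≤ d) {s : Set X}
    (hs : μH[d] s ≠ 0) : μH[d] (f '' s) ≠ 0 := fun h0 =>
  hs <| le_antisymm (by simpa [h0] using hf.le_hausdorffMeasure_image hd s) zero_le

lemma exists_nat_mul_rpow_le_pow {d : ℝ} {n : ℕ} (hdn : d < n) (A : ℝ) :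
    ∃ M : ℕ, 1 ≤ M ∧ A * (M : ℝ) ^ d ≤ (M : ℝ) ^ n := by
  have hgrow := (tendsto_rpow_atTop (sub_pos.mpr hdn)).comp tendsto_natCast_atTop_atTop
  obtain ⟨M, hA, hM⟩ := ((hgrow.eventually_ge_atTop A).and (eventually_ge_atTop 1)).exists
  have hM' : (0 : ℝ) < M := by exact_mod_cast hM
  refine ⟨M, hM, ?_⟩
  calc A * (M : ℝ) ^ d ≤ (M : ℝ) ^ ((n : ℝ) - d) * (M : ℝ) ^ d := by gcongr; exact hA
    _ = (M : ℝ) ^ n := by rw [← Real.rpow_add hM', sub_add_cancel, Real.rpow_natCast]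

lemma dimH_eq_ofReal_of_hausdorffMeasure {X : Type*} [EMetricSpace X] [MeasurableSpace X]
    [BorelSpace X] {s : Set X} {d : ℝ} (hd : 0 ≤ d) (h0 : μH[d] s ≠ 0) (htop : μH[d] s ≠ ∞) :
    dimH s = ENNReal.ofReal d := by
  rw [← Real.coe_toNNReal d hd] at h0 htop
  exact dimH_of_hausdorffMeasure_ne_zero_ne_top h0 htop

noncomputable def cantorMap (a : ℝ) (ω : ℕ → Fin 2) : ℝ := ∑' i, (ω i : ℝ) * a ^ i

section cantorMap

variable {a : ℝ}

lemma finTwo_cast_le_one (x : Fin 2) : (x : ℝ) ≤ 1 := by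
  have : (x : ℕ) ≤ 1 := Nat.lt_succ_iff.mp x.is_lt
  exact_mod_cast this

lemma abs_finTwo_cast_sub_cast_of_ne {x y : Fin 2} (h : x ≠ y) : |(x : ℝ) - y| = 1 := by
  fin_cases x <;> fin_cases y <;> simp_all

lemma summable_cantorMap (ha₀ : 0 ≤ a) (ha₁ : a < 1) (ω : ℕ → Fin 2) :
    Summable fun i => (ω i : ℝ) * a ^ i :=
  (summable_geometric_of_lt_one ha₀ ha₁).of_nonneg_of_le (fun _ => by positivity)
    fun i => mul_le_of_le_one_left (by positivity) (finTwo_cast_le_one _)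

lemma cantorMap_nonneg (ha₀ : 0 ≤ a) (ω : ℕ → Fin 2) : 0 ≤ cantorMap a ω :=
  tsum_nonneg fun _ => by positivity

lemma cantorMap_le_inv_one_sub (ha₀ : 0 ≤ a) (ha₁ : a < 1) (ω : ℕ → Fin 2) :
    cantorMap a ω ≤ (1 - a)⁻¹ := by
  rw [← tsum_geometric_of_lt_one ha₀ ha₁]
  exact (summable_cantorMap ha₀ ha₁ ω).tsum_le_tsum
    (fun i => mul_le_of_le_one_left (by positivity) (finTwo_cast_le_one _))
    (summable_geometric_of_lt_one ha₀ ha₁)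

lemma cantorMap_eq_sum_add (ha₀ : 0 ≤ a) (ha₁ : a < 1) (ω : ℕ → Fin 2) (k : ℕ) :
    cantorMap a ω = ∑ i ∈ Finset.range k, (ω i : ℝ) * a ^ i +
      a ^ k * cantorMap a (fun i => ω (i + k)) := by
  rw [cantorMap, cantorMap, ← (summable_cantorMap ha₀ ha₁ ω).sum_add_tsum_nat_add k,
    ← (summable_cantorMap ha₀ ha₁ _).tsum_mul_left]
  congr 1
  exact tsum_congr fun i => by ring

lemma cantorMap_eq_head_add (ha₀ : 0 ≤ a) (ha₁ : a < 1) (ω : ℕ → Fin 2) :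
    cantorMap a ω = ω 0 + a * cantorMap a (fun i => ω (i + 1)) := by
  simpa using cantorMap_eq_sum_add ha₀ ha₁ ω 1

lemma abs_cantorMap_sub_le_inv_one_sub (ha₀ : 0 ≤ a) (ha₁ : a < 1) (ω ω' : ℕ → Fin 2) :
    |cantorMap a ω - cantorMap a ω'| ≤ (1 - a)⁻¹ := by
  simpa using abs_sub_le_of_le_of_le (cantorMap_nonneg ha₀ ω)
    (cantorMap_le_inv_one_sub ha₀ ha₁ ω) (cantorMap_nonneg ha₀ ω')
    (cantorMap_le_inv_one_sub ha₀ ha₁ ω')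

lemma cantorMap_sub_eq_pow_mul (ha₀ : 0 ≤ a) (ha₁ : a < 1) {ω ω' : ℕ → Fin 2} {k : ℕ}
    (h : ∀ i < k, ω i = ω' i) :
    cantorMap a ω - cantorMap a ω' =
      a ^ k * (cantorMap a (fun i => ω (i + k)) - cantorMap a (fun i => ω' (i + k))) := by
  rw [cantorMap_eq_sum_add ha₀ ha₁ ω k, cantorMap_eq_sum_add ha₀ ha₁ ω' k,
    Finset.sum_congr rfl fun i hi => by rw [h i (Finset.mem_range.mp hi)],
    add_sub_add_left_eq_sub, mul_sub]

lemma abs_cantorMap_sub_le (ha₀ : 0 ≤ a) (ha₁ : a < 1) {ω ω' : ℕ → Fin 2} {k : ℕ}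
    (h : ∀ i < k, ω i = ω' i) :
    |cantorMap a ω - cantorMap a ω'| ≤ a ^ k * (1 - a)⁻¹ := by
  rw [cantorMap_sub_eq_pow_mul ha₀ ha₁ h, abs_mul, abs_of_nonneg (by positivity)]
  gcongr
  exact abs_cantorMap_sub_le_inv_one_sub ha₀ ha₁ _ _

lemma le_abs_cantorMap_sub_of_head_ne (ha₀ : 0 ≤ a) (ha₁ : a < 1) {ω ω' : ℕ → Fin 2}
    (h : ω 0 ≠ ω' 0) :
    (1 - 2 * a) / (1 - a) ≤ |cantorMap a ω - cantorMap a ω'| := by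
  set y := cantorMap a (fun i => ω (i + 1))
  set y' := cantorMap a (fun i => ω' (i + 1))
  have htail : |y - y'| ≤ (1 - a)⁻¹ := abs_cantorMap_sub_le_inv_one_sub ha₀ ha₁ _ _
  have hsplit := abs_sub_abs_le_abs_sub ((ω 0 : ℝ) - ω' 0) (a * (y' - y))
  rw [abs_finTwo_cast_sub_cast_of_ne h, abs_mul, abs_of_nonneg ha₀, abs_sub_comm] at hsplit
  have h1a : 0 < 1 - a := by linarith
  rw [cantorMap_eq_head_add ha₀ ha₁ ω, cantorMap_eq_head_add ha₀ ha₁ ω']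
  calc (1 - 2 * a) / (1 - a) = 1 - a * (1 - a)⁻¹ := by field_simp; ring
    _ ≤ 1 - a * |y - y'| := by gcongr
    _ ≤ |(ω 0 : ℝ) - ω' 0 - a * (y' - y)| := hsplit
    _ = _ := by congr 1; ring

lemma le_abs_cantorMap_sub (ha₀ : 0 ≤ a) (ha₁ : a < 1) {ω ω' : ℕ → Fin 2} {k : ℕ}
    (h : ∀ i < k, ω i = ω' i) (hk : ω k ≠ ω' k) :
    a ^ k * ((1 - 2 * a) / (1 - a)) ≤ |cantorMap a ω - cantorMap a ω'| := by
  rw [cantorMap_sub_eq_pow_mul ha₀ ha₁ h, abs_mul, abs_of_nonneg (by positivity)]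
  gcongr
  exact le_abs_cantorMap_sub_of_head_ne ha₀ ha₁ (by simpa using hk)

lemma continuous_cantorMap (ha₀ : 0 ≤ a) (ha₁ : a < 1) : Continuous (cantorMap a) :=
  continuous_tsum (fun i => by fun_prop) (summable_geometric_of_lt_one ha₀ ha₁)
    fun i ω => by
      rw [Real.norm_eq_abs, abs_of_nonneg (by positivity)]
      exact mul_le_of_le_one_left (by positivity) (finTwo_cast_le_one _)

end cantorMap

lemma abs_ofDigits_sub_le_mul_abs_cantorMap_sub_rpow {a s : ℝ} (ha : 0 < a) (ha₂ : a < 1 / 2)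
    (hs : 0 < s) (has : a ^ s = 2⁻¹) (ω ω' : ℕ → Fin 2) :
    |Real.ofDigits ω - Real.ofDigits ω'| ≤
      ((1 - a) / (1 - 2 * a)) ^ s * |cantorMap a ω - cantorMap a ω'| ^ s := by
  rcases eq_or_ne ω ω' with rfl | hne
  · simp [Real.zero_rpow hs.ne']
  set k := PiNat.firstDiff ω ω'
  have hagree : ∀ i < k, ω i = ω' i := fun i hi => PiNat.apply_eq_of_lt_firstDiff hi
  have ha₁ : a < 1 := by linarith
  have hq : 0 < (1 - 2 * a) / (1 - a) := div_pos (by linarith) (by linarith)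
  have hq' : 0 ≤ (1 - a) / (1 - 2 * a) := div_nonneg (by linarith) (by linarith)
  calc |Real.ofDigits ω - Real.ofDigits ω'| ≤ ((2 : ℝ) ^ k)⁻¹ := by
        simpa using Real.abs_ofDigits_sub_ofDigits_le (b := 2) hagree
    _ = ((1 - a) / (1 - 2 * a)) ^ s * (a ^ k * ((1 - 2 * a) / (1 - a))) ^ s := by
        rw [← Real.mul_rpow hq' (by positivity), ← inv_div, mul_comm,
          mul_assoc, mul_inv_cancel₀ hq.ne', mul_one, ← Real.rpow_pow_comm ha.le, has, inv_pow]
    _ ≤ _ := by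
        gcongr ?_ * ?_ ^ s
        exact le_abs_cantorMap_sub ha.le ha₁ hagree (PiNat.apply_firstDiff_ne hne)

def cantorDust (n : ℕ) (a : ℝ) : Set (Fin n → ℝ) :=
  range fun (w : Fin n → ℕ → Fin 2) j => cantorMap a (w j)

section cantorDust

variable {n : ℕ} {a : ℝ}

lemma isCompact_cantorDust (ha₀ : 0 ≤ a) (ha₁ : a < 1) : IsCompact (cantorDust n a) :=
  isCompact_range (continuous_pi fun j => (continuous_cantorMap ha₀ ha₁).comp (continuous_apply j))

lemma hausdorffMeasure_cantorDust_le (ha₀ : 0 ≤ a) (ha₁ : a < 1) {d : ℝ} (hd : 0 ≤ d)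
    (had : a ^ d = (2 ^ n)⁻¹) :
    μH[d] (cantorDust n a) ≤ ENNReal.ofReal ((1 - a)⁻¹ ^ d) := by
  set g : (Fin n → ℕ → Fin 2) → Fin n → ℝ := fun w j => cantorMap a (w j)
  set t : ∀ k : ℕ, (Fin n → Fin k → Fin 2) → Set (Fin n → ℝ) :=
    fun k w => g '' {x | ∀ j (i : Fin k), x j i = w j i}
  have hdiam : ∀ k w, Metric.ediam (t k w) ≤ ENNReal.ofReal (a ^ k * (1 - a)⁻¹) := by
    intro k w
    refine Metric.ediam_le ?_
    rintro - ⟨x, hx, rfl⟩ - ⟨y, hy, rfl⟩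
    refine edist_pi_le_iff.mpr fun j => ?_
    rw [edist_dist, Real.dist_eq]
    exact ENNReal.ofReal_le_ofReal <| abs_cantorMap_sub_le ha₀ ha₁ fun i hi => by
      rw [hx j ⟨i, hi⟩, hy j ⟨i, hi⟩]
  have hcover : ∀ k, cantorDust n a ⊆ ⋃ w, t k w := by
    rintro k - ⟨x, rfl⟩
    exact mem_iUnion.mpr ⟨fun j i => x j i, x, fun _ _ => rfl, rfl⟩
  have h1a : 0 ≤ (1 - a)⁻¹ := inv_nonneg.mpr (by linarith)
  have hsum : ∀ k, ∑ w, Metric.ediam (t k w) ^ d ≤ ENNReal.ofReal ((1 - a)⁻¹ ^ d) := by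
    intro k
    calc ∑ w, Metric.ediam (t k w) ^ d
        ≤ ∑ _w : Fin n → Fin k → Fin 2, ENNReal.ofReal (a ^ k * (1 - a)⁻¹) ^ d :=
          Finset.sum_le_sum fun w _ => ENNReal.rpow_le_rpow (hdiam k w) hd
      _ = ENNReal.ofReal ((2 ^ k) ^ n * (a ^ k * (1 - a)⁻¹) ^ d) := by
          rw [Finset.sum_const, Finset.card_univ, nsmul_eq_mul,
            ENNReal.ofReal_rpow_of_nonneg (by positivity) hd,
            ENNReal.ofReal_mul (by positivity)]
          simp
      _ = ENNReal.ofReal ((1 - a)⁻¹ ^ d) := by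
          rw [Real.mul_rpow (by positivity) h1a, ← Real.rpow_pow_comm ha₀, had, ← mul_assoc,
            inv_pow, ← pow_mul, ← pow_mul, mul_comm k n, mul_inv_cancel₀ (by positivity), one_mul]
  have hsmall : Tendsto (fun k : ℕ => ENNReal.ofReal (a ^ k * (1 - a)⁻¹)) atTop (𝓝 0) := by
    simpa using ENNReal.tendsto_ofReal
      ((tendsto_pow_atTop_nhds_zero_of_lt_one ha₀ ha₁).mul_const (1 - a)⁻¹)
  calc μH[d] (cantorDust n a)
      ≤ liminf (fun k => ∑ w, Metric.ediam (t k w) ^ d) atTop :=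
        Measure.hausdorffMeasure_le_liminf_sum d _ _ hsmall t (.of_forall hdiam)
          (.of_forall hcover)
    _ ≤ _ := liminf_le_of_frequently_le' (.of_forall hsum)

lemma hausdorffMeasure_Icc_zero_one_pi : μH[n] (Icc 0 1 : Set (Fin n → ℝ)) = 1 := by
  have h := hausdorffMeasure_pi_real (ι := Fin n)
  rw [Fintype.card_fin] at h
  simp [h, Real.volume_Icc_pi]

lemma edist_ofDigits_le_mul_edist_cantorMap_rpow (ha : 0 < a) (ha₂ : a < 1 / 2) {s : ℝ}
    (hs : 0 < s) (has : a ^ s = 2⁻¹) (x y : Fin n → ℕ → Fin 2) :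
    edist (fun j => Real.ofDigits (x j)) (fun j => Real.ofDigits (y j)) ≤
      (((1 - a) / (1 - 2 * a)) ^ s).toNNReal *
        edist (fun j => cantorMap a (x j)) (fun j => cantorMap a (y j)) ^ (s.toNNReal : ℝ) := by
  refine edist_pi_le_iff.mpr fun j => ?_
  calc edist (Real.ofDigits (x j)) (Real.ofDigits (y j))
      ≤ ENNReal.ofReal
          (((1 - a) / (1 - 2 * a)) ^ s * |cantorMap a (x j) - cantorMap a (y j)| ^ s) := by
        rw [edist_dist, Real.dist_eq]
        exact ENNReal.ofReal_le_ofReal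
          (abs_ofDigits_sub_le_mul_abs_cantorMap_sub_rpow ha ha₂ hs has _ _)
    _ = (((1 - a) / (1 - 2 * a)) ^ s).toNNReal *
          edist (cantorMap a (x j)) (cantorMap a (y j)) ^ (s.toNNReal : ℝ) := by
        rw [ENNReal.ofReal_mul (Real.rpow_nonneg (div_nonneg (by linarith) (by linarith)) s),
          edist_dist, Real.dist_eq, ← ENNReal.ofReal_rpow_of_nonneg (abs_nonneg _) hs.le,
          Real.coe_toNNReal s hs.le]
        rfl
    _ ≤ _ := by
        gcongr
        exact edist_le_pi_edist _ _ j

lemma hausdorffMeasure_cantorDust_ne_zero (ha : 0 < a) (ha₂ : a < 1 / 2) {s : ℝ} (hs : 0 < s)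
    (has : a ^ s = 2⁻¹) : μH[s * n] (cantorDust n a) ≠ 0 := by
  obtain ⟨F, hF, hFg⟩ := exists_holderOnWith_range_comp_eq (Real.toNNReal_pos.mpr hs)
    (edist_ofDigits_le_mul_edist_cantorMap_rpow ha ha₂ hs has)
  have hcube : Icc 0 1 ⊆ F '' cantorDust n a := by
    rw [cantorDust, ← range_comp, hFg]
    intro x hx
    choose w hw using fun j => Real.ofDigits_SurjOn one_lt_two (mem_Icc.mpr ⟨hx.1 j, hx.2 j⟩)
    exact ⟨w, funext fun j => (hw j).2⟩
  intro h0
  have : (1 : ℝ≥0∞) ≤ 0 :=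
    calc (1 : ℝ≥0∞) = μH[n] (Icc 0 1) := hausdorffMeasure_Icc_zero_one_pi.symm
      _ ≤ μH[n] (F '' cantorDust n a) := measure_mono hcube
      _ ≤ _ * μH[s.toNNReal * n] (cantorDust n a) :=
        hF.hausdorffMeasure_image_le (Real.toNNReal_pos.mpr hs) n.cast_nonneg
      _ = 0 := by rw [Real.coe_toNNReal s hs.le, h0, mul_zero]
  exact one_ne_zero (le_zero_iff.mp this)

end cantorDust

lemma exists_isCompact_hausdorffMeasure_ne_zero_ne_top_pi {n : ℕ} {d : ℝ} (hd : 0 < d)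
    (hdn : d < n) : ∃ K : Set (Fin n → ℝ), IsCompact K ∧ μH[d] K ≠ 0 ∧ μH[d] K ≠ ∞ := by
  have hn : (0 : ℝ) < n := hd.trans hdn
  set a : ℝ := (2 : ℝ) ^ (-(n / d))
  have ha : 0 < a := by positivity
  have ha₂ : a < 1 / 2 := by
    rw [one_div, ← Real.rpow_neg_one]
    exact Real.rpow_lt_rpow_of_exponent_lt one_lt_two
      (neg_lt_neg ((one_lt_div hd).mpr hdn))
  have has : a ^ (d / n) = 2⁻¹ := by
    rw [← Real.rpow_mul zero_le_two, show -(n / d) * (d / n) = (-1 : ℝ) by field_simp,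
      Real.rpow_neg_one]
  have had : a ^ d = (2 ^ n)⁻¹ := by
    rw [← Real.rpow_mul zero_le_two, show -(n / d) * d = -(n : ℝ) by field_simp,
      Real.rpow_neg zero_le_two, Real.rpow_natCast]
  refine ⟨cantorDust n a, isCompact_cantorDust ha.le (by linarith), ?_,
    ne_top_of_le_ne_top ENNReal.ofReal_ne_top
      (hausdorffMeasure_cantorDust_le ha.le (by linarith) hd.le had)⟩
  have := hausdorffMeasure_cantorDust_ne_zero (n := n) ha ha₂ (div_pos hd hn) has
  rwa [div_mul_cancel₀ d hn.ne'] at this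

section NormedSpace

open Module Metric

variable {E : Type*} [NormedAddCommGroup E] [MeasurableSpace E] [BorelSpace E]

lemma hausdorffMeasure_iUnion_vadd {ι : Type*} [Countable ι] {K : Set E} (hK : MeasurableSet K)
    {R : ℝ} (hKR : K ⊆ closedBall 0 R) {u : ι → E}
    (hu : Pairwise fun i j => 2 * R < dist (u i) (u j)) (d : ℝ) :
    μH[d] (⋃ i, u i +ᵥ K) = ∑' _ : ι, μH[d] K := by
  have hball : ∀ i, u i +ᵥ K ⊆ closedBall (u i) R := fun i => by
    simpa [Metric.vadd_closedBall] using vadd_set_mono (a := u i) hKR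
  rw [measure_iUnion (fun i j hij => (closedBall_disjoint_closedBall (by linarith [hu hij])).mono
    (hball i) (hball j)) fun i => hK.const_vadd (u i)]
  exact tsum_congr fun i => hausdorffMeasure_vadd _ (.inr (AddAction.surjective _)) K

variable [NormedSpace ℝ E]

lemma exists_isCompact_hausdorffMeasure_ne_zero_ne_top [FiniteDimensional ℝ E] {d : ℝ}
    (hd : 0 < d) (hdE : d < finrank ℝ E) :
    ∃ K : Set E, IsCompact K ∧ μH[d] K ≠ 0 ∧ μH[d] K ≠ ∞ := by
  obtain ⟨K, hK, hK0, hKtop⟩ := exists_isCompact_hausdorffMeasure_ne_zero_ne_top_pi hd hdE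
  let e : (Fin (finrank ℝ E) → ℝ) ≃L[ℝ] E := .ofFinrankEq (finrank_fin_fun ℝ)
  exact ⟨e '' K, hK.image e.continuous, e.antilipschitz.hausdorffMeasure_image_ne_zero hd.le hK0,
    e.lipschitz.hausdorffMeasure_image_ne_top hd.le hKtop⟩

omit [MeasurableSpace E] [BorelSpace E] in
lemma exists_separated_grid [FiniteDimensional ℝ E] (ρ : ℝ) :
    ∃ C, 0 ≤ C ∧ ∀ M : ℕ, ∃ u : (Fin (finrank ℝ E) → Fin M) → E,
      Pairwise (fun v w => ρ < dist (u v) (u w)) ∧ ∀ v, ‖u v‖ ≤ C * M := by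
  let e : (Fin (finrank ℝ E) → ℝ) ≃L[ℝ] E := .ofFinrankEq (finrank_fin_fun ℝ)
  set L := ‖(e.symm : E →L[ℝ] Fin (finrank ℝ E) → ℝ)‖
  set σ := (|ρ| + 1) * (L + 1)
  have hσ : 0 ≤ σ := by positivity
  refine ⟨‖(e : (Fin (finrank ℝ E) → ℝ) →L[ℝ] E)‖ * σ, by positivity,
    fun M => ⟨fun v => e fun j => σ * v j, ?_, ?_⟩⟩
  · intro v w hvw
    obtain ⟨j, hj⟩ := Function.ne_iff.mp hvw
    have hcoord : (1 : ℝ) ≤ |(v j : ℝ) - w j| := by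
      have : (1 : ℤ) ≤ |((v j : ℕ) : ℤ) - (w j : ℕ)| :=
        Int.one_le_abs (sub_ne_zero.mpr (by exact_mod_cast Fin.val_injective.ne hj))
      exact_mod_cast this
    have hσL : σ ≤ L * dist (e fun j => σ * v j) (e fun j => σ * w j) :=
      calc σ ≤ ‖(fun j => σ * (v j : ℝ)) - fun j => σ * w j‖ := by
            refine le_trans ?_ (norm_le_pi_norm _ j)
            rw [Pi.sub_apply, ← mul_sub, Real.norm_eq_abs, abs_mul, abs_of_nonneg hσ]
            nlinarith
        _ = ‖(e.symm : E →L[ℝ] Fin (finrank ℝ E) → ℝ)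
              ((e fun j => σ * v j) - e fun j => σ * w j)‖ := by simp
        _ ≤ _ := by rw [dist_eq_norm]; exact ContinuousLinearMap.le_opNorm _ _
    have hL : 0 ≤ L := norm_nonneg _
    -- `σ = (|ρ| + 1) (L + 1)` makes `σ ≤ L * dist` force `ρ < dist`, also when `L = 0`.
    by_contra! h
    nlinarith [abs_nonneg ρ, le_abs_self ρ]
  · intro v
    refine (ContinuousLinearMap.le_opNorm (e : (Fin (finrank ℝ E) → ℝ) →L[ℝ] E) _).trans ?_
    rw [mul_assoc]
    gcongr
    refine (pi_norm_le_iff_of_nonneg (by positivity)).mpr fun j => ?_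
    rw [Real.norm_eq_abs, abs_mul, abs_of_nonneg hσ, Nat.abs_cast]
    gcongr
    exact_mod_cast (v j).is_lt.le

lemma exists_isCompact_hausdorffMeasure_eq_pow_mul_diam_le [FiniteDimensional ℝ E] {K : Set E}
    (hK : IsCompact K) (d : ℝ) :
    ∃ C, 0 ≤ C ∧ ∀ M : ℕ, 1 ≤ M → ∃ Y : Set E, IsCompact Y ∧
      μH[d] Y = M ^ finrank ℝ E * μH[d] K ∧ diam Y ≤ C * M := by
  obtain ⟨R, hR, hKR⟩ := hK.isBounded.subset_closedBall_lt 0 0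
  obtain ⟨C, hC, hgrid⟩ := exists_separated_grid (E := E) (2 * R)
  refine ⟨2 * (C + R), by positivity, fun M hM => ?_⟩
  obtain ⟨u, hsep, hnorm⟩ := hgrid M
  refine ⟨⋃ v, u v +ᵥ K, isCompact_iUnion fun v => hK.vadd (u v), ?_, ?_⟩
  · rw [hausdorffMeasure_iUnion_vadd hK.measurableSet hKR hsep, tsum_fintype, Finset.sum_const,
      Finset.card_univ, Fintype.card_fun, Fintype.card_fin, Fintype.card_fin, nsmul_eq_mul]
    push_cast
    rfl
  · have hsub : (⋃ v, u v +ᵥ K) ⊆ closedBall 0 (C * M + R) := by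
      simp only [iUnion_subset_iff]
      rintro v - ⟨k, hk, rfl⟩
      rw [mem_closedBall_zero_iff]
      exact (norm_add_le _ _).trans (add_le_add (hnorm v) (mem_closedBall_zero_iff.mp (hKR hk)))
    have hM' : (1 : ℝ) ≤ M := by exact_mod_cast hM
    calc diam (⋃ v, u v +ᵥ K) ≤ 2 * (C * M + R) :=
          (diam_mono hsub isBounded_closedBall).trans (diam_closedBall (by positivity))
      _ ≤ 2 * (C + R) * M := by nlinarith

lemma exists_smul_hausdorffMeasure_eq_diam_le {d : ℝ} (hd : 0 < d) {Y : Set E} (hY : IsCompact Y)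
    {m : ℝ} (hm : 0 < m) (hYm : μH[d] Y = ENNReal.ofReal m) {c r : ℝ} (hc : 0 < c) (hr : 0 ≤ r)
    (hdiam : c * diam Y ^ d ≤ m * r ^ d) :
    ∃ Z : Set E, IsCompact Z ∧ μH[d] Z = ENNReal.ofReal c ∧ diam Z ≤ r := by
  set t := (c / m) ^ d⁻¹
  have ht : 0 < t := by positivity
  have htd : t ^ d = c / m := Real.rpow_inv_rpow (by positivity) hd.ne'
  refine ⟨t • Y, hY.smul t, ?_, ?_⟩
  · rw [Measure.hausdorffMeasure_smul₀ hd.le ht.ne', hYm, Real.nnnorm_of_nonneg ht.le,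
      ENNReal.smul_def, smul_eq_mul, ← ENNReal.ofReal_coe_nnreal, NNReal.coe_rpow,
      NNReal.coe_mk, htd, ← ENNReal.ofReal_mul (by positivity), div_mul_cancel₀ c hm.ne']
  · rw [diam_smul₀, Real.norm_of_nonneg ht.le,
      ← Real.rpow_le_rpow_iff (by positivity) hr hd, Real.mul_rpow ht.le diam_nonneg, htd]
    rw [div_mul_eq_mul_div, div_le_iff₀ hm]
    linarith

end NormedSpace

open Module Metric in
theorem exists_isCompact_dimH_eq_diam_le_hausdorffMeasure_eq {E : Type*} [NormedAddCommGroup E]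
    [NormedSpace ℝ E] [FiniteDimensional ℝ E] [MeasurableSpace E] [BorelSpace E] {d r c : ℝ}
    (hd : 0 < d) (hdE : d < finrank ℝ E) (hr : 0 < r) (hc : 0 < c) :
    ∃ Z : Set E, IsCompact Z ∧ dimH Z = ENNReal.ofReal d ∧ diam Z ≤ r ∧
      μH[d] Z = ENNReal.ofReal c := by
  obtain ⟨K, hK, hK0, hKtop⟩ := exists_isCompact_hausdorffMeasure_ne_zero_ne_top hd hdE
  obtain ⟨C, hC, hcopies⟩ := exists_isCompact_hausdorffMeasure_eq_pow_mul_diam_le hK d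
  set m := (μH[d] K).toReal
  have hm : 0 < m := ENNReal.toReal_pos hK0 hKtop
  obtain ⟨M, hM, hMgrow⟩ := exists_nat_mul_rpow_le_pow hdE (c * C ^ d / (m * r ^ d))
  obtain ⟨Y, hY, hYm, hYdiam⟩ := hcopies M hM
  have hYm' : μH[d] Y = ENNReal.ofReal (M ^ finrank ℝ E * m) := by
    rw [hYm, ENNReal.ofReal_mul (by positivity), ENNReal.ofReal_toReal hKtop]
    norm_cast
  have hdiam : c * diam Y ^ d ≤ M ^ finrank ℝ E * m * r ^ d := by
    calc c * diam Y ^ d ≤ c * (C * M) ^ d := by gcongr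
      _ = c * C ^ d / (m * r ^ d) * (M : ℝ) ^ d * (m * r ^ d) := by
        rw [Real.mul_rpow hC M.cast_nonneg]
        field_simp
      _ ≤ M ^ finrank ℝ E * m * r ^ d := by
        rw [mul_assoc _ m]
        gcongr
  obtain ⟨Z, hZ, hZm, hZdiam⟩ := exists_smul_hausdorffMeasure_eq_diam_le hd hY (by positivity)
    hYm' hc hr.le hdiam
  refine ⟨Z, hZ, dimH_eq_ofReal_of_hausdorffMeasure hd.le ?_ ?_, hZdiam, hZm⟩ <;>
    simp [hZm, hc]

theorem stmt_4_general (n : ℕ) (r c d : ℝ)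
    (hr : 0 < r) (hc : 0 < c) (hd : 0 < d) (hdn : d < n) :
    ∃ Z : Set (EuclideanSpace ℝ (Fin n)), IsCompact Z ∧
      dimH Z = ENNReal.ofReal d ∧ Metric.diam Z ≤ r ∧
      μH[d] Z = ENNReal.ofReal c :=
  exists_isCompact_dimH_eq_diam_le_hausdorffMeasure_eq hd (by simpa using hdn) hr hc

/-- Let n be a positive integer and r, c, d positive reals with d < n.
Then there is a compact set Z ⊂ ℝ^n with Hausdorff dimension d, diameter at most r,
and m_d(Z) = c (in particular Z is a d-set, since 0 < c < ∞). -/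
theorem stmt_4 (n : ℕ) (hn : 0 < n) (r c d : ℝ)
    (hr : 0 < r) (hc : 0 < c) (hd : 0 < d) (hdn : d < n) :
    ∃ Z : Set (EuclideanSpace ℝ (Fin n)), IsCompact Z ∧
      dimH Z = ENNReal.ofReal d ∧ Metric.diam Z ≤ r ∧
      μH[d] Z = ENNReal.ofReal c :=
  stmt_4_general n r c d hr hc hd hdn
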